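/- For a positive definite p×p matrix Θ and a symmetric p×p matrix T, if nᵀ Θ⁻¹ T Θ⁻¹ n = 0 for all n in ℕ^p outside a finite union of proper linear subspaces of ℝ^p, then T = 0. -/
import Mathlib


open Matrix

/-- A real quadratic `c0 + c1 t + c2 t²` vanishing on an infinite set of naturals has
zero constant coefficient. -/
lemma stmt_17_quad_zero (c0 c1 c2 : ℝ) (S : Set ℕ) (hS : S.Infinite)
    (h : ∀ t ∈ S, c0 + c1 * t + c2 * (t : ℝ) ^ 2 = 0) : c0 = 0 := by
  have hp : (Polynomial.C c0 + Polynomial.C c1 * Polynomial.X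
      + Polynomial.C c2 * Polynomial.X ^ 2 : Polynomial ℝ) = 0 := by
    apply Polynomial.eq_zero_of_infinite_isRoot
    apply Set.Infinite.mono ?_ (hS.image (Set.injOn_of_injective Nat.cast_injective))
    rintro x ⟨t, ht, rdotfl⟩
    subst rdotfl
    simp [Polynomial.IsRoot, h t ht]
  have := congrArg (Polynomial.eval 0) hp
  simpa using this

/-- If `Θ ≻ 0`, `T` is symmetric, and `nᵀΘ⁻¹TΘ⁻¹n = 0` for every non-negative integer
vector `n` outside a finite union of proper linear subspaces of `ℝ^p`, then `T = 0`. -/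
theorem stmt_17 (p k : ℕ) (hp : 0 < p)
    (Θ T : Matrix (Fin p) (Fin p) ℝ) (hΘ : Θ.PosDef) (hT : T.IsSymm)
    (Msub : Fin k → Submodule ℝ (Fin p → ℝ)) (hproper : ∀ i, Msub i ≠ ⊤)
    (hvanish : ∀ n : Fin p → ℕ, (∀ i, (fun j => (n j : ℝ)) ∉ Msub i) →
      (fun j => (n j : ℝ)) ⬝ᵥ (Θ⁻¹ * T * Θ⁻¹).mulVec (fun j => (n j : ℝ)) = 0) :
    T = 0 := by
  set A := Θ⁻¹ * T * Θ⁻¹ with hA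
  -- expansion of the quadratic form along a line
  have expand : ∀ (u v : Fin p → ℝ) (t : ℝ),
      (u + t • v) ⬝ᵥ A.mulVec (u + t • v)
        = u ⬝ᵥ A.mulVec u + (u ⬝ᵥ A.mulVec v + v ⬝ᵥ A.mulVec u) * t
          + (v ⬝ᵥ A.mulVec v) * t ^ 2 := by
    intro u v t
    simp only [mulVec_add, mulVec_smul, dotProduct_add, add_dotProduct,
      dotProduct_smul, smul_dotProduct, smul_eq_mul]
    ring
  -- main induction: the quadratic form vanishes on all of ℕ^p
  have main : ∀ s : Finset (Fin k), ∀ x : Fin p → ℕ,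
      (∀ i, i ∉ s → (fun j => (x j : ℝ)) ∉ Msub i) →
      (fun j => (x j : ℝ)) ⬝ᵥ A.mulVec (fun j => (x j : ℝ)) = 0 := by
    intro s
    induction s using Finset.induction_on with
    | empty =>
      intro x hx
      exact hvanish x fun i => hx i (Finset.notMem_empty i)
    | @insert a s ha ih =>
      intro x hx
      -- pick a coordinate direction avoiding `Msub a`
      obtain ⟨j, hj⟩ : ∃ j : Fin p, (fun m => if m = j then (1 : ℝ) else 0) ∉ Msub a := by
        by_contra hcon
        push_neg at hcon
        apply hproper a
        rw [eq_top_iff]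
        intro v _
        rw [pi_eq_sum_univ v]
        refine Submodule.sum_mem _ fun i _ => Submodule.smul_mem _ _ ?_
        have := hcon i
        convert this using 2 with m
        simp [eq_comm]
      set u : Fin p → ℝ := fun m => (x m : ℝ) with hu
      set e : Fin p → ℝ := fun m => if m = j then (1 : ℝ) else 0 with he
      -- the set of bad parameters is finite
      have bad_sub : ∀ i : Fin k, i ∉ s → {t : ℕ | u + (t : ℝ) • e ∈ Msub i}.Subsingleton := by
        intro i his
        by_cases hei : e ∈ Msub i
        · -- then membership would force `u ∈ Msub i`, contradiction
          have hia : i ≠ a := by rintro rfl; exact hj hei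
          have hui : u ∉ Msub i := hx i (by simp [his, hia])
          intro t ht
          exfalso
          apply hui
          have : u + (t : ℝ) • e - (t : ℝ) • e ∈ Msub i :=
            Submodule.sub_mem _ ht (Submodule.smul_mem _ _ hei)
          simpa using this
        · intro t1 h1 t2 h2
          by_contra hne
          apply hei
          have hsub : ((t1 : ℝ) - (t2 : ℝ)) • e ∈ Msub i := by
            have : (u + (t1 : ℝ) • e) - (u + (t2 : ℝ) • e) ∈ Msub i :=
              Submodule.sub_mem _ h1 h2
            convert this using 1
            module
          have hnz : ((t1 : ℝ) - (t2 : ℝ)) ≠ 0 := by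
            simp only [sub_ne_zero, ne_eq, Nat.cast_inj]
            exact hne
          have := Submodule.smul_mem _ ((t1 : ℝ) - (t2 : ℝ))⁻¹ hsub
          rwa [smul_smul, inv_mul_cancel₀ hnz, one_smul] at this
      have bad_fin : {t : ℕ | ∃ i, i ∉ s ∧ u + (t : ℝ) • e ∈ Msub i}.Finite := by
        have : {t : ℕ | ∃ i, i ∉ s ∧ u + (t : ℝ) • e ∈ Msub i}
            ⊆ ⋃ i ∈ (sᶜ : Finset (Fin k)), {t : ℕ | u + (t : ℝ) • e ∈ Msub i} := by
          rintro t ⟨i, his, hti⟩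
          exact Set.mem_biUnion (Finset.mem_compl.mpr his) hti
        refine Set.Finite.subset ?_ this
        refine Set.Finite.biUnion (Finset.finite_toSet _) fun i hi => ?_
        exact (bad_sub i (by simpa using hi)).finite
      have good_inf : {t : ℕ | ∃ i, i ∉ s ∧ u + (t : ℝ) • e ∈ Msub i}ᶜ.Infinite :=
        Set.Finite.infinite_compl bad_fin
      -- for good t, the quadratic vanishes
      have hgood : ∀ t ∈ {t : ℕ | ∃ i, i ∉ s ∧ u + (t : ℝ) • e ∈ Msub i}ᶜ,
          u ⬝ᵥ A.mulVec u + (u ⬝ᵥ A.mulVec e + e ⬝ᵥ A.mulVec u) * (t : ℝ)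
            + (e ⬝ᵥ A.mulVec e) * (t : ℝ) ^ 2 = 0 := by
        intro t ht
        simp only [Set.mem_compl_iff, Set.mem_setOf_eq, not_exists, not_and] at ht
        rw [← expand u e t]
        have hz : (fun m => ((x m + if m = j then t else 0 : ℕ) : ℝ)) = u + (t : ℝ) • e := by
          funext m
          by_cases hm : m = j <;> simp [hm, hu, he]
        have := ih (fun m => x m + if m = j then t else 0) ?_
        · rwa [hz] at this
        · intro i his
          rw [hz]
          exact ht i his
      exact stmt_17_quad_zero _ _ _ _ good_inf hgood
  have Qnat : ∀ x : Fin p → ℕ,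
      (fun j => (x j : ℝ)) ⬝ᵥ A.mulVec (fun j => (x j : ℝ)) = 0 := fun x =>
    main Finset.univ x (fun i hi => absurd (Finset.mem_univ i) hi)
  -- A is symmetric
  have hΘinv : Θ⁻¹ᵀ = Θ⁻¹ := by
    rw [transpose_nonsing_inv]
    congr 1
    rw [← conjTranspose_eq_transpose_of_trivial]
    exact hΘ.isHermitian.eq
  have hAsymm : Aᵀ = A := by
    rw [hA, transpose_mul, transpose_mul, hΘinv, hT.eq, mul_assoc]
  -- evaluate the quadratic form on basis vectors
  have hbasis : ∀ i i' : Fin p,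
      ((fun m => if m = i then (1 : ℝ) else 0) ⬝ᵥ
        A.mulVec (fun m => if m = i' then (1 : ℝ) else 0)) = A i i' := by
    intro i i'
    simp [dotProduct, mulVec, mul_ite, ite_mul]
  have hA0 : A = 0 := by
    ext i i'
    have h1 : (fun m => ((if m = i then 1 else 0 : ℕ) : ℝ)) ⬝ᵥ
        A.mulVec (fun m => ((if m = i then 1 else 0 : ℕ) : ℝ)) = 0 :=
      Qnat (fun m => if m = i then 1 else 0)
    have h2 : (fun m => ((if m = i' then 1 else 0 : ℕ) : ℝ)) ⬝ᵥ
        A.mulVec (fun m => ((if m = i' then 1 else 0 : ℕ) : ℝ)) = 0 :=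
      Qnat (fun m => if m = i' then 1 else 0)
    have h3 : (fun m => (((if m = i then 1 else 0) + (if m = i' then 1 else 0) : ℕ) : ℝ)) ⬝ᵥ
        A.mulVec (fun m => (((if m = i then 1 else 0) + (if m = i' then 1 else 0) : ℕ) : ℝ)) = 0 :=
      Qnat (fun m => (if m = i then 1 else 0) + (if m = i' then 1 else 0))
    have hcast : ∀ i : Fin p, (fun m => ((if m = i then 1 else 0 : ℕ) : ℝ))
        = (fun m => if m = i then (1 : ℝ) else 0) := by
      intro i; funext m; by_cases hm : m = i <;> simp [hm]
    rw [hcast] at h1 h2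
    have hcast2 : (fun m => (((if m = i then 1 else 0) + (if m = i' then 1 else 0) : ℕ) : ℝ))
        = (fun m => if m = i then (1 : ℝ) else 0) + (fun m => if m = i' then (1 : ℝ) else 0) := by
      funext m; push_cast; by_cases hm : m = i <;> by_cases hm' : m = i' <;> simp [hm, hm']
    rw [hcast2] at h3
    have hexp : ((fun m => if m = i then (1 : ℝ) else 0) + fun m => if m = i' then (1 : ℝ) else 0) ⬝ᵥ
        A.mulVec ((fun m => if m = i then (1 : ℝ) else 0) + fun m => if m = i' then (1 : ℝ) else 0)
        = A i i + A i i' + A i' i + A i' i' := by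
      simp only [mulVec_add, dotProduct_add, add_dotProduct, hbasis]
      ring
    rw [hexp] at h3
    rw [hbasis] at h1 h2
    have hsym : A i' i = A i i' := by
      conv_lhs => rw [← hAsymm]
      rfl
    rw [h1, h2, hsym] at h3
    simp only [Matrix.zero_apply]
    linarith
  -- recover T = 0 using invertibility of Θ
  have hdet : IsUnit Θ.det := isUnit_iff_ne_zero.mpr hΘ.det_pos.ne'
  have : Θ * A * Θ = T := by
    rw [hA]
    rw [show Θ * (Θ⁻¹ * T * Θ⁻¹) * Θ = (Θ * Θ⁻¹) * T * (Θ⁻¹ * Θ) by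
      simp only [Matrix.mul_assoc]]
    rw [Matrix.mul_nonsing_inv _ hdet, Matrix.nonsing_inv_mul _ hdet, Matrix.one_mul,
      Matrix.mul_one]
  rw [← this, hA0, Matrix.mul_zero, Matrix.zero_mul]
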